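/- arXiv:2405.03309 — 6 statements merged into one kernel-verified Lean document; each statement's English description precedes it below -/
import Mathlib

section
/- For natural numbers k, m ≥ 2, the necklace polynomial satisfies m · M(k,m) > k^m − k^(⌊m/2⌋+1). -/
open Finset

/-- The necklace polynomial `M(k,m) = (1/m) · Σ_{d ∣ m} μ(m/d) k^d` (as a rational number). -/
noncomputable def necklacePoly (k m : ℕ) : ℚ :=
  (∑ d ∈ m.divisors, (ArithmeticFunction.moebius (m / d) : ℚ) * (k : ℚ) ^ d) / m

/-!
Isolating the term `d = m` gives `m · M(k,m) = k^m + Σ μ(m/d) k^d` over the proper divisors `d`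
of `m`. Since `|μ| ≤ 1`, the tail is at least `-Σ k^d`; every proper divisor is at most `m/2`,
so that geometric sum of distinct powers of `k ≥ 2` is below `k^(m/2+1)`.
-/

namespace Nat

lemma le_div_two_of_mem_properDivisors {d n : ℕ} (h : d ∈ n.properDivisors) : d ≤ n / 2 := by
  obtain ⟨hdvd, -⟩ := mem_properDivisors.mp h
  rw [Nat.le_div_iff_mul_le two_pos]
  calc d * 2 ≤ d * (n / d) := Nat.mul_le_mul_left d (one_lt_div_of_mem_properDivisors h)
    _ = n := Nat.mul_div_cancel' hdvd

lemma sum_properDivisors_pow_lt {k : ℕ} (hk : 2 ≤ k) (n : ℕ) :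
    ∑ d ∈ n.properDivisors, k ^ d < k ^ (n / 2 + 1) :=
  geomSum_lt hk fun _ hd => lt_succ_of_le (le_div_two_of_mem_properDivisors hd)

end Nat

open scoped ArithmeticFunction.Moebius

namespace ArithmeticFunction

lemma neg_sum_le_sum_moebius_mul {R ι : Type*} [Ring R] [PartialOrder R] [IsOrderedRing R]
    (s : Finset ι) (f : ι → ℕ) {x : ι → R} (hx : ∀ i ∈ s, 0 ≤ x i) :
    -∑ i ∈ s, x i ≤ ∑ i ∈ s, (μ (f i) : R) * x i := by
  rw [← sum_neg_distrib]
  refine sum_le_sum fun i hi => ?_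
  have hμ : (-1 : R) ≤ μ (f i) := by
    simpa using Int.cast_mono (R := R) (neg_le_of_abs_le (abs_moebius_le_one (n := f i)))
  simpa using mul_le_mul_of_nonneg_right hμ (hx i hi)

end ArithmeticFunction

lemma mul_necklacePoly_eq {m : ℕ} (hm : m ≠ 0) (k : ℕ) :
    (m : ℚ) * necklacePoly k m = k ^ m + ∑ d ∈ m.properDivisors, (μ (m / d) : ℚ) * k ^ d := by
  rw [necklacePoly, mul_div_cancel₀ _ (Nat.cast_ne_zero.mpr hm),
    ← Nat.cons_self_properDivisors hm, sum_cons, Nat.div_self (Nat.pos_of_ne_zero hm),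
    ArithmeticFunction.moebius_apply_one, Int.cast_one, one_mul]

/-- For `k, m ≥ 2`, we have `m · M(k,m) > k^m − k^(⌊m/2⌋+1)`. -/
theorem mul_necklacePoly_gt (k m : ℕ) (hk : 2 ≤ k) (hm : 2 ≤ m) :
    (m : ℚ) * necklacePoly k m > (k : ℚ) ^ m - (k : ℚ) ^ (m / 2 + 1) := by
  have hsmall : ∑ d ∈ m.properDivisors, (k : ℚ) ^ d < (k : ℚ) ^ (m / 2 + 1) := by
    exact_mod_cast Nat.sum_properDivisors_pow_lt hk m
  have htail := ArithmeticFunction.neg_sum_le_sum_moebius_mul m.properDivisors (m / ·)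
    (x := fun d => (k : ℚ) ^ d) (fun d _ => by positivity)
  rw [gt_iff_lt, mul_necklacePoly_eq (by omega)]
  linarith
end

section
/- A pattern of shape (m,n) over an alphabet Σ (viewed as a word of length m over the alphabet Σ^n of rows) can occur at most once, counting vertical cyclic positions, in any cyclic array of height exactly m only if it is row-aperiodic; consequently, any (m, N; m, n)_k-sub-perfect map has width N at most M(k^n, m). -/
open Finset

/-- Vertical cyclic rotation of a pattern of shape `(m,n)` by `r` rows. -/
def vrot {m n k : ℕ} (r : Fin m) (P : Fin m → Fin n → Fin k) : Fin m → Fin n → Fin k :=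
  fun i => P (i + r)

/-- A pattern is row-periodic if some nontrivial vertical rotation fixes it. -/
def RowPeriodic {m n k : ℕ} (P : Fin m → Fin n → Fin k) : Prop :=
  ∃ r : Fin m, (r : ℕ) ≠ 0 ∧ vrot r P = P

/-- `A` is a cyclic `M × N` array in which every `(m,n)`-pattern occurs at most once. -/
def IsSubPerfectMap (M N m n : ℕ) {α : Type*} (A : ZMod M → ZMod N → α) : Prop :=
  ∀ p q : ZMod M × ZMod N,
    (∀ (a : Fin m) (b : Fin n),
        A (p.1 + (a : ℕ)) (p.2 + (b : ℕ)) = A (q.1 + (a : ℕ)) (q.2 + (b : ℕ))) → p = q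

/-- Pattern `P` occurs (at some cyclic position) in the array `A`. -/
def Occurs {M N m n k : ℕ} (A : ZMod M → ZMod N → Fin k) (P : Fin m → Fin n → Fin k) : Prop :=
  ∃ p : ZMod M × ZMod N, ∀ (a : Fin m) (b : Fin n), A (p.1 + (a : ℕ)) (p.2 + (b : ℕ)) = P a b

/-!
Read the `(m, n)`-pattern at a position of an array of height `m` as a cyclic word of length `m`
in rows. If it had a period `q < m`, the same pattern would reappear `q` rows lower, so every such
word has minimal period exactly `m`, and distinct positions give distinct words. Hence
`m N` is at most the number of words of length `m` over `k^n` letters with minimal period `m`.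
Words with period dividing `e ∣ m` are the `(k^n)^e` words factoring through `ZMod e`, and sorting
them by minimal period and applying Möbius inversion counts those of minimal period `m` as
`∑_{d ∣ m} μ(m/d) (k^n)^d = m M(k^n, m)`.
-/

open Function ArithmeticFunction

section CyclicShift

variable {β : Type*} {d : ℕ}

def cyclicShift (w : ZMod d → β) : ZMod d → β := fun i => w (i + 1)

theorem iterate_cyclicShift_apply (e : ℕ) (w : ZMod d → β) (i : ZMod d) :
    cyclicShift^[e] w i = w (i + e) := by
  induction e generalizing w with
  | zero => simp
  | succ e ih =>
    rw [iterate_succ_apply, ih, cyclicShift, Nat.cast_succ, add_assoc]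

theorem isPeriodicPt_cyclicShift_iff {e : ℕ} {w : ZMod d → β} :
    IsPeriodicPt cyclicShift e w ↔ ∀ i, w (i + e) = w i := by
  simp only [IsPeriodicPt, IsFixedPt, funext_iff, iterate_cyclicShift_apply]

theorem isPeriodicPt_cyclicShift_self (w : ZMod d → β) : IsPeriodicPt cyclicShift d w :=
  isPeriodicPt_cyclicShift_iff.2 fun i => by rw [ZMod.natCast_self, add_zero]

theorem minimalPeriod_cyclicShift_dvd (w : ZMod d → β) : minimalPeriod cyclicShift w ∣ d :=
  (isPeriodicPt_cyclicShift_self w).minimalPeriod_dvd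

variable [NeZero d]

theorem isPeriodicPt_cyclicShift_iff_exists_comp_castHom {e : ℕ} (he : e ∣ d)
    {w : ZMod d → β} :
    IsPeriodicPt cyclicShift e w ↔ ∃ u : ZMod e → β, u ∘ ZMod.castHom he (ZMod e) = w := by
  have : NeZero e := ⟨ne_zero_of_dvd_ne_zero (NeZero.ne d) he⟩
  constructor
  · intro hw
    refine ⟨fun j => w (j.val : ℕ), funext fun i => ?_⟩
    -- `i.val = i.val % e + e * (i.val / e)`, and `w` is invariant under shifts by multiples of `e`
    have hshift := isPeriodicPt_cyclicShift_iff.1 (hw.mul_const (i.val / e)) ((i.val % e : ℕ))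
    rw [← Nat.cast_add, Nat.mod_add_div, ZMod.natCast_zmod_val] at hshift
    rw [comp_apply, ← ZMod.natCast_zmod_val i, map_natCast, ZMod.val_natCast,
      ZMod.natCast_zmod_val, hshift]
  · rintro ⟨u, rfl⟩
    refine isPeriodicPt_cyclicShift_iff.2 fun i => ?_
    rw [comp_apply, comp_apply, map_add, map_natCast, ZMod.natCast_self, add_zero]

variable [Fintype β] [DecidableEq β]

theorem card_isPeriodicPt_cyclicShift {e : ℕ} (he : e ∣ d) :
    #{w : ZMod d → β | IsPeriodicPt cyclicShift e w} = Fintype.card β ^ e := by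
  have : NeZero e := ⟨ne_zero_of_dvd_ne_zero (NeZero.ne d) he⟩
  have hrange : ({w : ZMod d → β | IsPeriodicPt cyclicShift e w} : Finset _) =
      univ.image (· ∘ ZMod.castHom he (ZMod e)) := by
    ext w
    simp [isPeriodicPt_cyclicShift_iff_exists_comp_castHom he]
  rw [hrange, card_image_of_injective _ (ZMod.castHom_surjective he).injective_comp_right,
    card_univ, Fintype.card_fun, ZMod.card]

theorem sum_card_minimalPeriod_cyclicShift {e : ℕ} (he : e ∣ d) :
    ∑ f ∈ e.divisors, #{w : ZMod d → β | minimalPeriod cyclicShift w = f} =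
      Fintype.card β ^ e := by
  rw [← card_isPeriodicPt_cyclicShift he,
    card_eq_sum_card_fiberwise (f := minimalPeriod cyclicShift) (t := e.divisors)]
  · refine sum_congr rfl fun f hf => congrArg card ?_
    ext w
    simp only [mem_filter, mem_univ, true_and, iff_and_self]
    rintro rfl
    exact isPeriodicPt_iff_minimalPeriod_dvd.2 (Nat.dvd_of_mem_divisors hf)
  · intro w hw
    simp only [coe_filter, mem_univ, true_and, Set.mem_ofPred_eq] at hw
    exact Nat.mem_divisors.2 ⟨hw.minimalPeriod_dvd, ne_zero_of_dvd_ne_zero (NeZero.ne d) he⟩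

theorem card_minimalPeriod_cyclicShift_eq_length (R : Type*) [CommRing R] :
    (#{w : ZMod d → β | minimalPeriod cyclicShift w = d} : R) =
      ∑ e ∈ d.divisors, (moebius (d / e) : R) * (Fintype.card β : R) ^ e := by
  have hinv := (sum_eq_iff_sum_mul_moebius_eq_on (R := R)
    (f := fun f => (#{w : ZMod d → β | minimalPeriod cyclicShift w = f} : R))
    (g := fun e => (Fintype.card β : R) ^ e) {e | e ∣ d}
    (fun _ _ h hn => h.trans hn)).1
    (fun e _ he => by
      simpa only [Nat.cast_sum, Nat.cast_pow] using
        congrArg (Nat.cast : ℕ → R) (sum_card_minimalPeriod_cyclicShift he))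
    d (Nat.pos_of_ne_zero (NeZero.ne d)) dvd_rfl
  rw [← hinv,
    Nat.sum_divisorsAntidiagonal' (fun a b => (moebius a : R) * (Fintype.card β : R) ^ b)]

end CyclicShift

section SubPerfectMap

variable {m N n : ℕ} {α : Type*} {A : ZMod m → ZMod N → α}

/-- The `(m, n)`-pattern at `p`, as a cyclic word of length `m` over the alphabet of rows. -/
def columnWord (A : ZMod m → ZMod N → α) (n : ℕ) (p : ZMod m × ZMod N) : ZMod m → Fin n → α :=
  fun i b => A (p.1 + i) (p.2 + (b : ℕ))

theorem IsSubPerfectMap.eq_zero_of_shift (hA : IsSubPerfectMap m N m n A) (x : ZMod m)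
    (y : ZMod N) {r : ZMod m} (h : ∀ (a : Fin m) (b : Fin n),
      A (x + ((a : ℕ) + r)) (y + (b : ℕ)) = A (x + (a : ℕ)) (y + (b : ℕ))) : r = 0 :=
  add_eq_left.1 <| congrArg Prod.fst <| hA (x + r, y) (x, y) fun a b => by
    rw [add_assoc, add_comm r]
    exact h a b

theorem IsSubPerfectMap.columnWord_injective (hA : IsSubPerfectMap m N m n A) :
    Injective (columnWord A n) := fun p q hpq =>
  hA p q fun a b => congrFun (congrFun hpq (a : ℕ)) b

theorem IsSubPerfectMap.minimalPeriod_columnWord [NeZero m] (hA : IsSubPerfectMap m N m n A)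
    (p : ZMod m × ZMod N) : minimalPeriod cyclicShift (columnWord A n p) = m := by
  set q := minimalPeriod cyclicShift (columnWord A n p)
  have hper := isPeriodicPt_cyclicShift_iff.1 (isPeriodicPt_minimalPeriod cyclicShift
    (columnWord A n p))
  have hq : (q : ZMod m) = 0 := hA.eq_zero_of_shift p.1 p.2 fun a b =>
    congrFun (hper (a : ℕ)) b
  exact Nat.dvd_antisymm (minimalPeriod_cyclicShift_dvd _)
    ((ZMod.natCast_eq_zero_iff q m).1 hq)

theorem IsSubPerfectMap.not_rowPeriodic_of_occurs {k : ℕ} {A : ZMod m → ZMod N → Fin k}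
    (hA : IsSubPerfectMap m N m n A) {P : Fin m → Fin n → Fin k} (hP : Occurs A P) :
    ¬ RowPeriodic P := by
  rintro ⟨r, hr, hrot⟩
  obtain ⟨p, hp⟩ := hP
  have hr0 : ((r : ℕ) : ZMod m) = 0 := hA.eq_zero_of_shift p.1 p.2 fun a b => by
    have hval : (((a + r : Fin m) : ℕ) : ZMod m) = (a : ℕ) + (r : ℕ) := by
      rw [Fin.val_add, ZMod.natCast_mod, Nat.cast_add]
    rw [← hval, hp, hp]
    exact congrFun (congrFun hrot a) b
  exact hr (Nat.eq_zero_of_dvd_of_lt ((ZMod.natCast_eq_zero_iff _ m).1 hr0) r.isLt)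

end SubPerfectMap

theorem deBruijnRing_width_bound_general (m n N k : ℕ) (hm : 2 ≤ m)
    (A : ZMod m → ZMod N → Fin k) (hA : IsSubPerfectMap m N m n A) :
    (∀ P : Fin m → Fin n → Fin k, Occurs A P → ¬ RowPeriodic P) ∧
    (N : ℚ) ≤ (∑ d ∈ m.divisors,
        (ArithmeticFunction.moebius (m / d) : ℚ) * ((k : ℚ) ^ n) ^ d) / m := by
  have : NeZero m := ⟨by omega⟩
  refine ⟨fun P => hA.not_rowPeriodic_of_occurs, ?_⟩
  have hwords : m * N ≤ #{w : ZMod m → Fin n → Fin k | minimalPeriod cyclicShift w = m} :=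
    calc m * N = Nat.card (ZMod m × ZMod N) := by rw [Nat.card_prod, Nat.card_zmod, Nat.card_zmod]
    _ ≤ Nat.card {w : ZMod m → Fin n → Fin k // minimalPeriod cyclicShift w = m} :=
      Nat.card_le_card_of_injective (fun p => ⟨columnWord A n p, hA.minimalPeriod_columnWord p⟩)
        fun p q hpq => hA.columnWord_injective (congrArg Subtype.val hpq)
    _ = _ := by rw [Nat.card_eq_fintype_card, Fintype.card_subtype]
  have hcount := card_minimalPeriod_cyclicShift_eq_length (d := m) (β := Fin n → Fin k) ℚ
  simp only [Fintype.card_fun, Fintype.card_fin, Nat.cast_pow] at hcount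
  rw [le_div_iff₀ (by exact_mod_cast (NeZero.pos m)), mul_comm, ← hcount]
  exact_mod_cast hwords

/-- In a cyclic array of height exactly `m` in which every `(m,n)`-pattern occurs at most once
(counting vertical cyclic positions), only row-aperiodic patterns can occur; consequently, any
`(m, N; m, n)_k`-sub-perfect map has width `N ≤ M(k^n, m)`, the necklace number. -/
theorem deBruijnRing_width_bound (m n N k : ℕ) (hm : 2 ≤ m) (hn : 2 ≤ n) (hk : 2 ≤ k)
    (hN : 1 ≤ N) (A : ZMod m → ZMod N → Fin k) (hA : IsSubPerfectMap m N m n A) :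
    (∀ P : Fin m → Fin n → Fin k, Occurs A P → ¬ RowPeriodic P) ∧
    (N : ℚ) ≤ (∑ d ∈ m.divisors,
        (ArithmeticFunction.moebius (m / d) : ℚ) * ((k : ℚ) ^ n) ^ d) / m :=
  deBruijnRing_width_bound_general m n N k hm A hA
end

section
/- For m, n ≥ 2 and k ≥ 2, the fraction of row-aperiodic (m,n)-patterns over a k-letter alphabet tends to 1 as m → ∞ (with n, k fixed), as n → ∞ (with m, k fixed), and as k → ∞ (with m, n fixed). -/
/-!
Put `q = k ^ n`, so that `ap(m,n,k) · q ^ m = ∑_{d ∣ m} μ(m/d) q ^ d`. Apart from `d = m`, which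
contributes `q ^ m`, every divisor satisfies `d ≤ m / 2`, so `|ap(m,n,k) - 1| ≤ m / q ^ ⌈m/2⌉`.
This tends to `0` when `q → ∞` with `m` fixed, and, since `q ^ ⌈m/2⌉ ≥ (√q) ^ m` with `√q > 1`,
also when `m → ∞`.
-/

open Finset Filter

/-- The fraction `ap(m,n,k) = m·M(k^n, m)/k^(mn)` of row-aperiodic `(m,n)`-patterns over a
`k`-letter alphabet, where `M` is the necklace polynomial. -/
noncomputable def apFrac (m n k : ℕ) : ℝ :=
  (m : ℝ) * ((∑ d ∈ m.divisors,
      (ArithmeticFunction.moebius (m / d) : ℝ) * ((k : ℝ) ^ n) ^ d) / m) / (k : ℝ) ^ (m * n)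

open ArithmeticFunction
open scoped ArithmeticFunction.Moebius

lemma Nat.le_div_two_of_mem_properDivisors_s10 {d m : ℕ} (h : d ∈ m.properDivisors) : d ≤ m / 2 :=
  (Nat.le_div_iff_mul_le two_pos).2 <|
    calc d * 2 ≤ d * (m / d) := Nat.mul_le_mul_left d (Nat.one_lt_div_of_mem_properDivisors h)
      _ = m := Nat.mul_div_cancel' (Nat.mem_properDivisors.1 h).1

lemma abs_sum_moebius_mul_pow_sub_pow_le {q : ℝ} (hq : 1 ≤ q) {m : ℕ} (hm : m ≠ 0) :
    |∑ d ∈ m.divisors, (μ (m / d) : ℝ) * q ^ d - q ^ m| ≤ m * q ^ (m / 2) := by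
  rw [← Nat.cons_self_properDivisors hm, sum_cons, Nat.div_self (Nat.pos_of_ne_zero hm),
    moebius_apply_one, Int.cast_one, one_mul, add_sub_cancel_left]
  calc |∑ d ∈ m.properDivisors, (μ (m / d) : ℝ) * q ^ d|
      ≤ ∑ d ∈ m.properDivisors, |(μ (m / d) : ℝ) * q ^ d| := abs_sum_le_sum_abs _ _
    _ ≤ ∑ _d ∈ m.properDivisors, q ^ (m / 2) := by
      refine sum_le_sum fun d hd => ?_
      have hqd : 0 ≤ q ^ d := pow_nonneg (zero_le_one.trans hq) d
      calc |(μ (m / d) : ℝ) * q ^ d| = |(μ (m / d) : ℝ)| * q ^ d := by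
            rw [abs_mul, abs_of_nonneg hqd]
        _ ≤ q ^ d := mul_le_of_le_one_left hqd (mod_cast abs_moebius_le_one)
        _ ≤ q ^ (m / 2) := pow_le_pow_right₀ hq (Nat.le_div_two_of_mem_properDivisors_s10 hd)
    _ ≤ m * q ^ (m / 2) := by
      rw [sum_const, nsmul_eq_mul]
      gcongr
      exact (card_le_card Nat.properDivisors_subset_divisors).trans (Nat.card_divisors_le_self m)

lemma apFrac_eq (m n k : ℕ) :
    apFrac m n k =
      (∑ d ∈ m.divisors, (μ (m / d) : ℝ) * ((k : ℝ) ^ n) ^ d) / ((k : ℝ) ^ n) ^ m := by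
  rcases eq_or_ne m 0 with rfl | hm
  · simp [apFrac]
  · rw [apFrac, mul_div_cancel₀ _ (Nat.cast_ne_zero.2 hm), mul_comm m n, pow_mul]

lemma abs_apFrac_sub_one_le {m k : ℕ} (hm : m ≠ 0) (hk : k ≠ 0) (n : ℕ) :
    |apFrac m n k - 1| ≤ m / ((k : ℝ) ^ n) ^ ((m + 1) / 2) := by
  set q : ℝ := (k : ℝ) ^ n
  have hq : 1 ≤ q := one_le_pow₀ (Nat.one_le_cast.2 (Nat.pos_of_ne_zero hk))
  have hq0 : 0 < q := zero_lt_one.trans_le hq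
  have hqm : q ^ m = q ^ (m / 2) * q ^ ((m + 1) / 2) := by rw [← pow_add]; congr 1; omega
  rw [apFrac_eq, div_sub_one (pow_pos hq0 m).ne', abs_div, abs_of_pos (pow_pos hq0 m),
    div_le_div_iff₀ (pow_pos hq0 m) (pow_pos hq0 _)]
  calc |∑ d ∈ m.divisors, (μ (m / d) : ℝ) * q ^ d - q ^ m| * q ^ ((m + 1) / 2)
      ≤ m * q ^ (m / 2) * q ^ ((m + 1) / 2) := by
        gcongr; exact abs_sum_moebius_mul_pow_sub_pow_le hq hm
    _ = m * q ^ m := by rw [hqm, mul_assoc]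

lemma Real.sqrt_pow_le_pow_add_one_div_two {q : ℝ} (hq : 1 ≤ q) (m : ℕ) :
    √q ^ m ≤ q ^ ((m + 1) / 2) := by
  calc √q ^ m ≤ √q ^ (2 * ((m + 1) / 2)) := pow_le_pow_right₀ (Real.one_le_sqrt.2 hq) (by omega)
    _ = q ^ ((m + 1) / 2) := by rw [pow_mul, Real.sq_sqrt (by positivity)]

lemma tendsto_of_abs_sub_le {α : Type*} {l : Filter α} {f g : α → ℝ} {a : ℝ}
    (h : ∀ᶠ x in l, |f x - a| ≤ g x) (hg : Tendsto g l (nhds 0)) : Tendsto f l (nhds a) :=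
  tendsto_iff_norm_sub_tendsto_zero.2 <|
    squeeze_zero' (.of_forall fun _ => norm_nonneg _) (by simpa only [Real.norm_eq_abs]) hg

/-- For `m, n, k ≥ 2`, the fraction of row-aperiodic `(m,n)`-patterns tends to `1` as
`m → ∞` (with `n,k` fixed), as `n → ∞` (with `m,k` fixed), and as `k → ∞` (with `m,n`
fixed). -/
theorem apFrac_tendsto_one (m n k : ℕ) (hm : 2 ≤ m) (hn : 2 ≤ n) (hk : 2 ≤ k) :
    Tendsto (fun m' => apFrac m' n k) atTop (nhds 1) ∧
    Tendsto (fun n' => apFrac m n' k) atTop (nhds 1) ∧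
    Tendsto (fun k' => apFrac m n k') atTop (nhds 1) := by
  have hk1 : (1 : ℝ) < k := by exact_mod_cast hk
  have hm2 : (m + 1) / 2 ≠ 0 := by omega
  refine ⟨?_, ?_, ?_⟩
  · set q : ℝ := (k : ℝ) ^ n
    have hq : 1 < q := one_lt_pow₀ hk1 (by omega)
    refine tendsto_of_abs_sub_le ?_ <| tendsto_self_mul_const_pow_of_lt_one (r := (√q)⁻¹)
      (by positivity) (inv_lt_one_of_one_lt₀ (Real.lt_sqrt (by positivity) |>.2 (by rwa [one_pow])))
    filter_upwards [eventually_ne_atTop 0] with m' hm'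
    calc |apFrac m' n k - 1| ≤ m' / q ^ ((m' + 1) / 2) := abs_apFrac_sub_one_le hm' (by omega) n
      _ ≤ m' / √q ^ m' := by gcongr; exact Real.sqrt_pow_le_pow_add_one_div_two hq.le m'
      _ = m' * (√q)⁻¹ ^ m' := by rw [inv_pow, div_eq_mul_inv]
  · exact tendsto_of_abs_sub_le
      (.of_forall fun n' => abs_apFrac_sub_one_le (by omega) (by omega) n')
      (tendsto_const_nhds.div_atTop
        ((tendsto_pow_atTop hm2).comp (tendsto_pow_atTop_atTop_of_one_lt hk1)))
  · exact tendsto_of_abs_sub_le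
      ((eventually_ne_atTop 0).mono fun k' hk' => abs_apFrac_sub_one_le (by omega) hk' n)
      (tendsto_const_nhds.div_atTop ((tendsto_pow_atTop hm2).comp
        ((tendsto_pow_atTop (by omega)).comp tendsto_natCast_atTop_atTop)))
end

section
/- For every alphabet size k ≥ 2 and every pattern shape (m,n) with m ≥ 2, n ≥ 2, there exists an (m, M(k^n, m); m, n)_k-sub-perfect map, i.e., a cyclic m × M(k^n,m) array over a k-letter alphabet in which every (m,n)-pattern occurs at most once; this map contains every row-aperiodic (m,n)-pattern exactly once and is of maximal width among sub-perfect maps of height m. -/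
open Finset

/-- The necklace number `M(q,m) = (1/m) · Σ_{d ∣ m} μ(m/d) q^d` as a natural number. -/
noncomputable def necklaceNat (q m : ℕ) : ℕ :=
  ((∑ d ∈ m.divisors, ArithmeticFunction.moebius (m / d) * (q : ℤ) ^ d) / m).toNat

/-- A pattern is row-aperiodic if no nontrivial vertical rotation fixes it. -/
def RowAperiodic {m n k : ℕ} (P : Fin m → Fin n → Fin k) : Prop :=
  ∀ r : Fin m, (r : ℕ) ≠ 0 → vrot r P ≠ P

/-!
An aperiodic `m × (n+1)` pattern taken up to vertical rotation is a necklace of length `m` over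
the alphabet of rows `Fin (n+1) → α`; sorting all words by their minimal period and inverting
with Möbius shows there are `M(k^(n+1), m)` of them. These necklaces are the edges of the ring
graph, whose vertices are `m × n` arrays up to rotation, an edge running from its first `n`
columns to its last `n`. Rotating columns cyclically makes every vertex balanced, and a marker
column (one letter in row `0`, another elsewhere) forces aperiodicity and so connects the graph.
An Eulerian circuit, lifted to actual patterns from a constant vertex, is a cyclic sequence of
patterns each overlapping the next in `n` columns; their first columns form the array. Every
window of the array is a rotation of one of these patterns, which gives sub-perfectness and the
occurrence of each aperiodic pattern. Conversely, the windows along the top row of any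
sub-perfect map of height `m` are aperiodic and pairwise inequivalent, which bounds its width.
-/

namespace DeBruijnRing

section Rotation

variable {α β γ : Type*} {ℓ : ℕ}

def rot (t : ZMod ℓ) (w : ZMod ℓ → α) : ZMod ℓ → α := fun i => w (i + t)

@[simp] lemma rot_zero (w : ZMod ℓ → α) : rot 0 w = w := by
  funext i; simp [rot]

lemma rot_rot (s t : ZMod ℓ) (w : ZMod ℓ → α) : rot s (rot t w) = rot (s + t) w := by
  funext i; simp [rot, add_assoc]

lemma comp_rot (f : α → β) (t : ZMod ℓ) (w : ZMod ℓ → α) : f ∘ rot t w = rot t (f ∘ w) :=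
  rfl

lemma iterate_rot_one (t : ℕ) (w : ZMod ℓ → α) : (rot 1)^[t] w = rot (t : ZMod ℓ) w := by
  induction t with
  | zero => simp
  | succ t ih => rw [Function.iterate_succ_apply', ih, rot_rot, Nat.cast_succ, add_comm]

lemma isPeriodicPt_rot_one_iff {t : ℕ} {w : ZMod ℓ → α} :
    Function.IsPeriodicPt (rot 1) t w ↔ rot (t : ZMod ℓ) w = w := by
  rw [Function.IsPeriodicPt, Function.IsFixedPt, iterate_rot_one]

lemma isPeriodicPt_rot_one_self (w : ZMod ℓ → α) : Function.IsPeriodicPt (rot 1) ℓ w := by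
  simp [isPeriodicPt_rot_one_iff]

def Aperiodic (w : ZMod ℓ → α) : Prop := ∀ t, rot t w = w → t = 0

lemma Aperiodic.rot_injective {w : ZMod ℓ → α} (hw : Aperiodic w) :
    Function.Injective fun t => rot t w := by
  intro s t hst
  have : rot (-t + s) w = w := by
    simpa [rot_rot] using congrArg (rot (-t)) hst
  exact (neg_add_eq_zero.mp (hw _ this)).symm

lemma aperiodic_rot {w : ZMod ℓ → α} (hw : Aperiodic w) (t : ZMod ℓ) : Aperiodic (rot t w) := by
  intro s hs
  rw [rot_rot] at hs
  simpa using hw.rot_injective (show rot (s + t) w = rot (0 + t) w by rwa [zero_add])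

lemma Aperiodic.comp (f : α → β) (hf : Function.Injective f) {w : ZMod ℓ → α}
    (hw : Aperiodic w) : Aperiodic (f ∘ w) :=
  fun t ht => hw t (hf.comp_left (by rwa [comp_rot] : f ∘ rot t w = f ∘ w))

lemma Aperiodic.of_comp (f : α → β) {w : ZMod ℓ → α} (hw : Aperiodic (f ∘ w)) : Aperiodic w :=
  fun t ht => hw t (by rw [← comp_rot, ht])

lemma aperiodic_marker {a b : α} (hab : a ≠ b) :
    Aperiodic fun i : ZMod ℓ => if i = 0 then a else b := by
  intro t ht
  have h0 := congrFun ht 0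
  simp only [rot, zero_add] at h0
  by_contra ht0
  exact hab (by rwa [if_neg ht0, eq_comm] at h0)

lemma aperiodic_iff_minimalPeriod_eq [NeZero ℓ] {w : ZMod ℓ → α} :
    Aperiodic w ↔ Function.minimalPeriod (rot 1) w = ℓ := by
  constructor
  · intro hw
    have hp := Function.isPeriodicPt_minimalPeriod (rot 1) w
    rw [isPeriodicPt_rot_one_iff] at hp
    exact Nat.dvd_antisymm (isPeriodicPt_rot_one_self w).minimalPeriod_dvd
      ((ZMod.natCast_eq_zero_iff _ ℓ).mp (hw _ hp))
  · intro hw t ht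
    rw [← ZMod.natCast_zmod_val t, ← isPeriodicPt_rot_one_iff] at ht
    have hdvd := ht.minimalPeriod_dvd
    rw [hw] at hdvd
    rw [← ZMod.val_eq_zero]
    exact Nat.eq_zero_of_dvd_of_lt hdvd t.val_lt

def rotSetoid (ℓ : ℕ) (α : Type*) : Setoid (ZMod ℓ → α) where
  r w w' := ∃ t, rot t w = w'
  iseqv :=
    ⟨fun w => ⟨0, rot_zero w⟩,
      fun ⟨t, h⟩ => ⟨-t, by rw [← h, rot_rot, neg_add_cancel, rot_zero]⟩,
      fun ⟨s, h⟩ ⟨t, h'⟩ => ⟨t + s, by rw [← h', ← h, rot_rot]⟩⟩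

/-- Aperiodic necklaces, counted in the paper as Lyndon words. -/
def Necklace (ℓ : ℕ) (α : Type*) : Type _ :=
  Quotient ((rotSetoid ℓ α).comap (Subtype.val : {w : ZMod ℓ → α // Aperiodic w} → _))

namespace Necklace

instance [Finite α] [NeZero ℓ] : Finite (Necklace ℓ α) := Quotient.finite _

def mk (w : ZMod ℓ → α) (hw : Aperiodic w) : Necklace ℓ α := Quotient.mk _ ⟨w, hw⟩

lemma mk_eq_mk_iff {w w' : ZMod ℓ → α} {hw : Aperiodic w} {hw' : Aperiodic w'} :
    mk w hw = mk w' hw' ↔ ∃ t, rot t w = w' :=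
  Quotient.eq

lemma exists_mk_eq (c : Necklace ℓ α) : ∃ w hw, mk w hw = c := by
  obtain ⟨⟨w, hw⟩, rfl⟩ := Quotient.exists_rep c
  exact ⟨w, hw, rfl⟩

lemma mk_rot {w : ZMod ℓ → α} (hw : Aperiodic w) (t : ZMod ℓ) :
    mk (rot t w) (aperiodic_rot hw t) = mk w hw :=
  (mk_eq_mk_iff.mpr ⟨t, rfl⟩).symm

def map (f : β → γ) : Necklace ℓ β → Quotient (rotSetoid ℓ γ) :=
  Quotient.lift (fun w => ⟦f ∘ w.1⟧) fun _ _ ⟨t, h⟩ => Quotient.sound ⟨t, h ▸ rfl⟩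

@[simp] lemma map_mk (f : β → γ) (w : ZMod ℓ → β) (hw : Aperiodic w) :
    (mk w hw).map f = ⟦f ∘ w⟧ :=
  rfl

lemma exists_mk_eq_of_map_eq (f : β → γ) (c : Necklace ℓ β) (v : ZMod ℓ → γ)
    (h : c.map f = ⟦v⟧) : ∃ w hw, mk w hw = c ∧ f ∘ w = v := by
  obtain ⟨w, hw, rfl⟩ := exists_mk_eq c
  obtain ⟨t, ht⟩ := Quotient.exact h
  exact ⟨rot t w, aperiodic_rot hw t, mk_rot hw t, ht⟩

def congr (g : β ≃ γ) : Necklace ℓ β ≃ Necklace ℓ γ where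
  toFun := Quotient.map (fun w => ⟨g ∘ w.1, w.2.comp g g.injective⟩)
    fun _ _ ⟨t, h⟩ => ⟨t, congrArg (g ∘ ·) h⟩
  invFun := Quotient.map (fun w => ⟨g.symm ∘ w.1, w.2.comp g.symm g.symm.injective⟩)
    fun _ _ ⟨t, h⟩ => ⟨t, congrArg (g.symm ∘ ·) h⟩
  left_inv := Quotient.ind fun w => congrArg (Quotient.mk _) (Subtype.ext (by ext; simp))
  right_inv := Quotient.ind fun w => congrArg (Quotient.mk _) (Subtype.ext (by ext; simp))

lemma map_congr (g : β ≃ γ) (f : γ → α) (c : Necklace ℓ β) :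
    (congr g c).map f = c.map (f ∘ g) := by
  obtain ⟨w, hw, rfl⟩ := exists_mk_eq c
  rfl

end Necklace

end Rotation

section Counting

variable {α : Type*} {ℓ : ℕ}

lemma card_aperiodic_eq_card_necklace_mul [NeZero ℓ] :
    Nat.card {w : ZMod ℓ → α // Aperiodic w} = Nat.card (Necklace ℓ α) * ℓ := by
  let f : Necklace ℓ α × ZMod ℓ → {w : ZMod ℓ → α // Aperiodic w} :=
    fun ct => ⟨rot ct.2 ct.1.out.1, aperiodic_rot ct.1.out.2 ct.2⟩
  have hf : Function.Bijective f := by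
    constructor
    · rintro ⟨c, s⟩ ⟨c', t⟩ h
      have h' : rot s c.out.1 = rot t c'.out.1 := congrArg Subtype.val h
      obtain rfl : c = c' := by
        rw [← Quotient.out_eq c, ← Quotient.out_eq c']
        exact Quotient.sound ⟨-t + s, by rw [← rot_rot, h', rot_rot, neg_add_cancel, rot_zero]⟩
      exact Prod.ext rfl (c.out.2.rot_injective h')
    · rintro ⟨w, hw⟩
      obtain ⟨t, ht⟩ := Quotient.mk_out (s := (rotSetoid ℓ α).comap Subtype.val) ⟨w, hw⟩
      exact ⟨(Necklace.mk w hw, t), Subtype.ext ht⟩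
  rw [← Nat.card_congr (Equiv.ofBijective f hf), Nat.card_prod, Nat.card_zmod]

lemma rot_comp_castHom {d : ℕ} (hd : d ∣ ℓ) (t : ZMod ℓ) (u : ZMod d → α) :
    rot t (u ∘ ZMod.castHom hd (ZMod d)) =
      rot (ZMod.castHom hd (ZMod d) t) u ∘ ZMod.castHom hd (ZMod d) := by
  funext i; simp only [rot, Function.comp_apply, map_add]

lemma minimalPeriod_comp_castHom {d : ℕ} (hd : d ∣ ℓ) (u : ZMod d → α) :
    Function.minimalPeriod (rot 1) (u ∘ ZMod.castHom hd (ZMod d)) =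
      Function.minimalPeriod (rot 1) u := by
  refine Function.minimalPeriod_eq_minimalPeriod_iff.mpr fun t => ?_
  rw [isPeriodicPt_rot_one_iff, isPeriodicPt_rot_one_iff, rot_comp_castHom, map_natCast]
  exact ⟨fun h => (ZMod.ringHom_surjective _).injective_comp_right h, fun h => by rw [h]⟩

lemma comp_castHom_of_minimalPeriod_eq [NeZero ℓ] {d : ℕ} [NeZero d] (hd : d ∣ ℓ)
    {w : ZMod ℓ → α} (hw : Function.minimalPeriod (rot 1) w = d) :
    (fun y : ZMod d => w (y.val : ZMod ℓ)) ∘ ZMod.castHom hd (ZMod d) = w := by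
  set c := ZMod.castHom hd (ZMod d)
  have hker (x : ZMod ℓ) (hx : c x = 0) : rot x w = w := by
    rw [← ZMod.natCast_zmod_val x, map_natCast, ZMod.natCast_eq_zero_iff] at hx
    rw [← ZMod.natCast_zmod_val x, ← isPeriodicPt_rot_one_iff,
      Function.isPeriodicPt_iff_minimalPeriod_dvd, hw]
    exact hx
  funext i
  have hi : c (i - ((c i).val : ZMod ℓ)) = 0 := by
    rw [map_sub, map_natCast, ZMod.natCast_zmod_val, sub_self]
  calc w ((c i).val : ZMod ℓ) = rot (i - ((c i).val : ZMod ℓ)) w ((c i).val : ZMod ℓ) := by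
        rw [hker _ hi]
    _ = w i := by simp only [rot, add_sub_cancel]

lemma card_minimalPeriod_eq [NeZero ℓ] {d : ℕ} [NeZero d] (hd : d ∣ ℓ) :
    Nat.card {w : ZMod ℓ → α // Function.minimalPeriod (rot 1) w = d} =
      Nat.card {u : ZMod d → α // Aperiodic u} := by
  let extend (u : {u : ZMod d → α // Aperiodic u}) :
      {w : ZMod ℓ → α // Function.minimalPeriod (rot 1) w = d} :=
    ⟨u.1 ∘ ZMod.castHom hd (ZMod d), by
      rw [minimalPeriod_comp_castHom, ← aperiodic_iff_minimalPeriod_eq]; exact u.2⟩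
  refine (Nat.card_congr (Equiv.ofBijective extend ⟨fun u u' h => ?_, fun ⟨w, hw⟩ => ?_⟩)).symm
  · exact Subtype.ext ((ZMod.ringHom_surjective _).injective_comp_right (congrArg Subtype.val h))
  · refine ⟨⟨fun y => w (y.val : ZMod ℓ), ?_⟩,
      Subtype.ext (comp_castHom_of_minimalPeriod_eq hd hw)⟩
    rw [aperiodic_iff_minimalPeriod_eq, ← minimalPeriod_comp_castHom hd,
      comp_castHom_of_minimalPeriod_eq hd hw, hw]

lemma sum_card_aperiodic [Finite α] (hℓ : ℓ ≠ 0) :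
    ∑ d ∈ ℓ.divisors, Nat.card {u : ZMod d → α // Aperiodic u} = Nat.card α ^ ℓ := by
  have : NeZero ℓ := ⟨hℓ⟩
  have := Fintype.ofFinite α
  classical
  have hmem (w : ZMod ℓ → α) : Function.minimalPeriod (rot 1) w ∈ ℓ.divisors :=
    Nat.mem_divisors.mpr ⟨(isPeriodicPt_rot_one_self w).minimalPeriod_dvd, hℓ⟩
  calc ∑ d ∈ ℓ.divisors, Nat.card {u : ZMod d → α // Aperiodic u}
      = ∑ d ∈ ℓ.divisors, #{w : ZMod ℓ → α | Function.minimalPeriod (rot 1) w = d} := by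
        refine Finset.sum_congr rfl fun d hd => ?_
        have : NeZero d := ⟨Nat.ne_of_gt (Nat.pos_of_mem_divisors hd)⟩
        rw [← card_minimalPeriod_eq (Nat.dvd_of_mem_divisors hd), Nat.card_eq_fintype_card,
          Fintype.card_subtype]
    _ = Fintype.card (ZMod ℓ → α) :=
        (Finset.card_eq_sum_card_fiberwise fun w _ => hmem w).symm
    _ = Nat.card α ^ ℓ := by rw [← Nat.card_eq_fintype_card, Nat.card_fun, Nat.card_zmod]

lemma card_aperiodic_eq_sum_moebius [Finite α] (hℓ : 0 < ℓ) :
    (Nat.card {w : ZMod ℓ → α // Aperiodic w} : ℤ) =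
      ∑ d ∈ ℓ.divisors, ArithmeticFunction.moebius (ℓ / d) * (Nat.card α : ℤ) ^ d := by
  rw [← Nat.sum_divisorsAntidiagonal' fun a b =>
      (ArithmeticFunction.moebius a : ℤ) * (Nat.card α : ℤ) ^ b,
    ← (ArithmeticFunction.sum_eq_iff_sum_smul_moebius_eq
      (f := fun d => (Nat.card {u : ZMod d → α // Aperiodic u} : ℤ))
      (g := fun d => (Nat.card α : ℤ) ^ d)).mp
      (fun d hd => by exact_mod_cast sum_card_aperiodic hd.ne') ℓ hℓ]
  simp

theorem card_necklace [Finite α] [NeZero ℓ] :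
    Nat.card (Necklace ℓ α) = necklaceNat (Nat.card α) ℓ := by
  have hℓ : 0 < ℓ := Nat.pos_of_ne_zero (NeZero.ne ℓ)
  rw [necklaceNat, ← card_aperiodic_eq_sum_moebius hℓ, card_aperiodic_eq_card_necklace_mul,
    Nat.cast_mul, Int.mul_ediv_cancel _ (by exact_mod_cast hℓ.ne'), Int.toNat_natCast]

end Counting

section Walks

variable {V E : Type*} (src tgt : E → V)

inductive IsWalk : V → List E → V → Prop
  | nil (v : V) : IsWalk v [] v
  | cons {e : E} {l : List E} {w : V} : IsWalk (tgt e) l w → IsWalk (src e) (e :: l) w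

def Balanced [DecidableEq V] (S : Finset E) : Prop :=
  ∀ x, #{e ∈ S | src e = x} = #{e ∈ S | tgt e = x}

def Joins (S : Finset E) (a b : V) : Prop := ∃ e ∈ S, src e = a ∧ tgt e = b

def Visits (v : V) (l : List E) (w x : V) : Prop :=
  ∃ l₁ l₂, l = l₁ ++ l₂ ∧ IsWalk src tgt v l₁ x ∧ IsWalk src tgt x l₂ w

variable {src tgt} {S T : Finset E} {v w x : V} {l l₁ l₂ : List E}

lemma isWalk_nil_iff : IsWalk src tgt v [] w ↔ v = w :=
  ⟨fun h => by cases h; rfl, fun h => h ▸ .nil v⟩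

lemma isWalk_cons_iff {e : E} :
    IsWalk src tgt v (e :: l) w ↔ src e = v ∧ IsWalk src tgt (tgt e) l w :=
  ⟨fun h => by cases h with | cons h => exact ⟨rfl, h⟩, fun ⟨h, h'⟩ => h ▸ .cons h'⟩

lemma isWalk_append_iff :
    IsWalk src tgt v (l₁ ++ l₂) w ↔ ∃ x, IsWalk src tgt v l₁ x ∧ IsWalk src tgt x l₂ w := by
  induction l₁ generalizing v with
  | nil => simp [isWalk_nil_iff]
  | cons e l₁ ih =>
    simp only [List.cons_append, isWalk_cons_iff, ih, and_assoc, exists_and_left]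

lemma IsWalk.append (h₁ : IsWalk src tgt v l₁ x) (h₂ : IsWalk src tgt x l₂ w) :
    IsWalk src tgt v (l₁ ++ l₂) w :=
  isWalk_append_iff.mpr ⟨x, h₁, h₂⟩

lemma IsWalk.drop_succ (h : IsWalk src tgt v l w) {j : ℕ} (hj : j < l.length) :
    IsWalk src tgt (tgt l[j]) (l.drop (j + 1)) w := by
  induction h generalizing j with
  | nil => simp at hj
  | cons h ih =>
    cases j with
    | zero => exact h
    | succ j => exact ih (Nat.lt_of_succ_lt_succ hj)

lemma IsWalk.tgt_getElem_eq_src_getElem_add_one (h : IsWalk src tgt v l v) [NeZero l.length]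
    (j : ZMod l.length) : tgt (l[j.val]'j.val_lt) = src (l[(j + 1).val]'(j + 1).val_lt) := by
  have hj : (j + 1).val = (j.val + 1) % l.length := by
    rw [ZMod.val_add, ZMod.val_one_eq_one_mod, Nat.add_mod_mod]
  have hdrop := h.drop_succ j.val_lt
  simp only [hj]
  by_cases hlt : j.val + 1 < l.length
  · simp only [Nat.mod_eq_of_lt hlt]
    rw [List.drop_eq_getElem_cons hlt, isWalk_cons_iff] at hdrop
    exact hdrop.1.symm
  · have hlast : j.val + 1 = l.length := le_antisymm j.val_lt (not_lt.mp hlt)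
    rw [List.drop_eq_nil_of_le hlast.ge, isWalk_nil_iff] at hdrop
    have hcons := List.drop_eq_getElem_cons (i := 0) (l := l) (by omega)
    rw [List.drop_zero] at hcons
    rw [hcons, isWalk_cons_iff] at h
    simp only [hlast, Nat.mod_self, hdrop, h.1]

lemma IsWalk.countP_src_add [DecidableEq V] (h : IsWalk src tgt v l w) (x : V) :
    l.countP (src · = x) + (if w = x then 1 else 0) =
      l.countP (tgt · = x) + (if v = x then 1 else 0) := by
  induction h with
  | nil => rfl
  | cons _ ih =>
    simp only [List.countP_cons, decide_eq_true_eq] at ih ⊢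
    split_ifs at ih ⊢ <;> omega

lemma IsWalk.visits_start (h : IsWalk src tgt v l w) : Visits src tgt v l w v :=
  ⟨[], l, rfl, .nil v, h⟩

lemma IsWalk.visits_of_mem (h : IsWalk src tgt v l w) {f : E} (hf : f ∈ l) :
    Visits src tgt v l w (src f) ∧ Visits src tgt v l w (tgt f) := by
  obtain ⟨l₁, l₂, rfl⟩ := List.append_of_mem hf
  obtain ⟨x, h₁, h₂⟩ := isWalk_append_iff.mp h
  obtain ⟨rfl, h₃⟩ := isWalk_cons_iff.mp h₂
  exact ⟨⟨l₁, f :: l₂, rfl, h₁, h₂⟩, ⟨l₁ ++ [f], l₂, by simp, h₁.append (.cons (.nil _)), h₃⟩⟩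

lemma IsWalk.exists_not_mem_visits (h : IsWalk src tgt v l w)
    (hx : Relation.EqvGen (Joins src tgt S) v x) (hxl : ¬Visits src tgt v l w x) :
    ∃ e ∈ S, e ∉ l ∧ (Visits src tgt v l w (src e) ∨ Visits src tgt v l w (tgt e)) := by
  by_contra! hno
  -- otherwise the visited vertices would form a union of classes of `EqvGen (Joins S)`
  have key (a b : V) (hab : Relation.EqvGen (Joins src tgt S) a b) :
      Visits src tgt v l w a ↔ Visits src tgt v l w b := by
    induction hab with
    | rel a b hab =>
      obtain ⟨e, heS, rfl, rfl⟩ := hab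
      by_cases hel : e ∈ l
      · exact iff_of_true (h.visits_of_mem hel).1 (h.visits_of_mem hel).2
      · exact iff_of_false (hno e heS hel).1 (hno e heS hel).2
    | refl => rfl
    | symm _ _ _ ih => exact ih.symm
    | trans _ _ _ _ _ ih₁ ih₂ => exact ih₁.trans ih₂
  exact hxl ((key v x hx).mp h.visits_start)

lemma IsWalk.lift {V' E' : Type*} {src' tgt' : E' → V'} {π : E' → E} {ρ : V' → V}
    (htgt : ∀ e', tgt (π e') = ρ (tgt' e'))
    (hlift : ∀ e v', src e = ρ v' → ∃ e', π e' = e ∧ src' e' = v') :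
    ∀ {l : List E} {v' : V'}, IsWalk src tgt (ρ v') l w →
      ∃ l' w', IsWalk src' tgt' v' l' w' ∧ l'.map π = l ∧ ρ w' = w
  | [], v', h => ⟨[], v', .nil v', rfl, isWalk_nil_iff.mp h⟩
  | e :: l, v', h => by
    obtain ⟨he, hl⟩ := isWalk_cons_iff.mp h
    obtain ⟨e', rfl, rfl⟩ := hlift e v' he
    obtain ⟨l', w', h', hmap, hw⟩ := IsWalk.lift htgt hlift (htgt e' ▸ hl)
    exact ⟨e' :: l', w', .cons h', by simp [hmap], hw⟩

section Trails

variable [DecidableEq V] [DecidableEq E]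

lemma card_filter_toFinset (hl : l.Nodup) (p : E → Prop) [DecidablePred p] :
    #{e ∈ l.toFinset | p e} = l.countP (p ·) := by
  rw [List.countP_eq_length_filter, ← List.toFinset_card_of_nodup (hl.filter _),
    List.toFinset_filter]
  simp

lemma length_le_card_of_nodup (hl : l.Nodup) (hlS : ∀ e ∈ l, e ∈ S) : l.length ≤ #S :=
  (List.toFinset_card_of_nodup hl).symm.trans_le
    (Finset.card_le_card fun e he => hlS e (List.mem_toFinset.mp he))

lemma IsWalk.balanced_toFinset (h : IsWalk src tgt v l v) (hl : l.Nodup) :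
    Balanced src tgt l.toFinset := by
  intro x
  have := h.countP_src_add x
  rw [card_filter_toFinset hl, card_filter_toFinset hl]
  omega

lemma Balanced.sdiff (hS : Balanced src tgt S) (hT : Balanced src tgt T) (hTS : T ⊆ S) :
    Balanced src tgt (S \ T) := by
  have key (p : E → Prop) [DecidablePred p] :
      #{e ∈ S \ T | p e} = #{e ∈ S | p e} - #{e ∈ T | p e} := by
    rw [← Finset.card_sdiff_of_subset (Finset.filter_subset_filter p hTS)]
    congr 1
    ext e
    simp only [Finset.mem_filter, Finset.mem_sdiff]
    tauto
  intro x
  rw [key, key, hS x, hT x]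

lemma IsWalk.exists_not_mem_src_eq (hS : Balanced src tgt S) (h : IsWalk src tgt v l w)
    (hl : l.Nodup) (hlS : ∀ e ∈ l, e ∈ S) (hwv : w ≠ v) : ∃ e ∈ S, e ∉ l ∧ src e = w := by
  have hw := h.countP_src_add w
  rw [if_pos rfl, if_neg hwv.symm, ← card_filter_toFinset hl, ← card_filter_toFinset hl] at hw
  have hin : #{e ∈ l.toFinset | tgt e = w} ≤ #{e ∈ S | tgt e = w} :=
    Finset.card_le_card <|
      Finset.filter_subset_filter _ fun e he => hlS e (List.mem_toFinset.mp he)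
  obtain ⟨e, he, hel⟩ := Finset.exists_mem_notMem_of_card_lt_card
    (s := {e ∈ l.toFinset | src e = w}) (t := {e ∈ S | src e = w}) (by rw [hS w]; omega)
  rw [Finset.mem_filter] at he hel
  exact ⟨e, he.1, fun hel' => hel ⟨List.mem_toFinset.mpr hel', he.2⟩, he.2⟩

theorem IsWalk.exists_closed_extension {w : V} {l : List E} (hS : Balanced src tgt S)
    (h : IsWalk src tgt v l w) (hl : l.Nodup) (hlS : ∀ e ∈ l, e ∈ S) :
    ∃ l', IsWalk src tgt v (l ++ l') v ∧ (l ++ l').Nodup ∧ ∀ e ∈ l ++ l', e ∈ S := by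
  by_cases hwv : w = v
  · subst hwv
    exact ⟨[], by simpa using h, by simpa using hl, by simpa using hlS⟩
  obtain ⟨e, heS, hel, rfl⟩ := h.exists_not_mem_src_eq hS hl hlS hwv
  have hl' : (l ++ [e]).Nodup := hl.append (List.nodup_singleton e) (by simpa using hel)
  have hlS' : ∀ f ∈ l ++ [e], f ∈ S := by
    simpa [or_imp, forall_and] using ⟨hlS, heS⟩
  have := length_le_card_of_nodup hl' hlS'
  obtain ⟨l', h', hl'', hlS''⟩ :=
    IsWalk.exists_closed_extension hS (h.append (.cons (.nil (tgt e)))) hl' hlS'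
  exact ⟨e :: l', by simpa using h', by simpa using hl'', by simpa using hlS''⟩
termination_by #S - l.length
decreasing_by simp only [List.length_append, List.length_singleton] at this ⊢; omega

lemma IsWalk.exists_not_mem_visits_src (hS : Balanced src tgt S)
    (hconn : ∀ e ∈ S, Relation.EqvGen (Joins src tgt S) v (src e))
    (h : IsWalk src tgt v l v) (hl : l.Nodup) (hlS : ∀ e ∈ l, e ∈ S)
    (hmiss : ∃ e ∈ S, e ∉ l) : ∃ e ∈ S, e ∉ l ∧ Visits src tgt v l v (src e) := by
  obtain ⟨e₀, he₀S, he₀l⟩ := hmiss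
  obtain ⟨e, heS, hel, hsrc | htgt⟩ :
      ∃ e ∈ S, e ∉ l ∧ (Visits src tgt v l v (src e) ∨ Visits src tgt v l v (tgt e)) := by
    by_cases h₀ : Visits src tgt v l v (src e₀)
    · exact ⟨e₀, he₀S, he₀l, .inl h₀⟩
    · exact h.exists_not_mem_visits (hconn e₀ he₀S) h₀
  · exact ⟨e, heS, hel, hsrc⟩
  · -- the unused edges are balanced, and one of them enters `tgt e`
    have hR := hS.sdiff (h.balanced_toFinset hl) fun f hf => hlS f (List.mem_toFinset.mp hf)
    obtain ⟨f, hf⟩ : ({f ∈ S \ l.toFinset | src f = tgt e}).Nonempty := by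
      rw [← Finset.card_pos, hR]
      exact Finset.card_pos.mpr ⟨e, by simp [heS, hel]⟩
    simp only [Finset.mem_filter, Finset.mem_sdiff, List.mem_toFinset] at hf
    exact ⟨f, hf.1.1, hf.1.2, hf.2 ▸ htgt⟩

/-- Hierholzer's step: splice into `l` a closed trail of unused edges through a vertex of `l`. -/
lemma IsWalk.exists_longer_closed (hS : Balanced src tgt S)
    (hconn : ∀ e ∈ S, Relation.EqvGen (Joins src tgt S) v (src e))
    (h : IsWalk src tgt v l v) (hl : l.Nodup) (hlS : ∀ e ∈ l, e ∈ S)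
    (hmiss : ∃ e ∈ S, e ∉ l) :
    ∃ l', IsWalk src tgt v l' v ∧ l'.Nodup ∧ (∀ e ∈ l', e ∈ S) ∧ l.length < l'.length := by
  obtain ⟨e, heS, hel, l₁, l₂, rfl, h₁, h₂⟩ :=
    h.exists_not_mem_visits_src hS hconn hl hlS hmiss
  have hR := hS.sdiff (h.balanced_toFinset hl) fun f hf => hlS f (List.mem_toFinset.mp hf)
  obtain ⟨D, hD, hDnd, hDR⟩ := IsWalk.exists_closed_extension hR
    (.cons (.nil (tgt e)) : IsWalk src tgt (src e) [e] (tgt e)) (List.nodup_singleton e)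
    (by simpa [heS] using hel)
  have hDl (f : E) (hf : f ∈ [e] ++ D) : f ∉ l₁ ++ l₂ := by
    simpa using (Finset.mem_sdiff.mp (hDR f hf)).2
  refine ⟨l₁ ++ (([e] ++ D) ++ l₂), h₁.append (hD.append h₂), ?_, fun f hf => ?_, by simp⟩
  · refine (List.perm_append_comm_assoc _ _ _).nodup_iff.mpr
      (List.nodup_append.mpr ⟨hDnd, hl, ?_⟩)
    rintro f hf _ hf' rfl
    exact hDl f hf hf'
  · rcases List.mem_append.mp hf with hf | hf
    · exact hlS f (List.mem_append_left _ hf)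
    rcases List.mem_append.mp hf with hf | hf
    · exact (Finset.mem_sdiff.mp (hDR f hf)).1
    · exact hlS f (List.mem_append_right _ hf)

theorem IsWalk.exists_eulerian_circuit {l : List E} (hS : Balanced src tgt S)
    (hconn : ∀ e ∈ S, Relation.EqvGen (Joins src tgt S) v (src e))
    (h : IsWalk src tgt v l v) (hl : l.Nodup) (hlS : ∀ e ∈ l, e ∈ S) :
    ∃ c, IsWalk src tgt v c v ∧ c.Nodup ∧ ∀ e, e ∈ c ↔ e ∈ S := by
  by_cases hmiss : ∃ e ∈ S, e ∉ l
  · obtain ⟨l', h', hl', hlS', hlt⟩ := h.exists_longer_closed hS hconn hl hlS hmiss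
    have := length_le_card_of_nodup hl' hlS'
    exact IsWalk.exists_eulerian_circuit hS hconn h' hl' hlS'
  · exact ⟨l, h, hl, fun e => ⟨hlS e, fun he => by_contra fun hel => hmiss ⟨e, he, hel⟩⟩⟩
termination_by #S - l.length

theorem exists_eulerian_circuit (hS : Balanced src tgt S)
    (hconn : ∀ e ∈ S, Relation.EqvGen (Joins src tgt S) v (src e)) :
    ∃ c, IsWalk src tgt v c v ∧ c.Nodup ∧ ∀ e, e ∈ c ↔ e ∈ S :=
  (IsWalk.nil v).exists_eulerian_circuit hS hconn List.nodup_nil (by simp)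

end Trails

end Walks

section RingGraph

variable {α : Type*} {m n : ℕ}

/-- Rotating the columns cyclically by one turns the last `n` columns into the first `n`. -/
lemma balanced_ringGraph [Fintype (Necklace m (Fin (n + 1) → α))]
    [DecidableEq (Quotient (rotSetoid m (Fin n → α)))] :
    Balanced (Necklace.map Fin.init) (Necklace.map Fin.tail)
      (univ : Finset (Necklace m (Fin (n + 1) → α))) := by
  let τ := Necklace.congr (ℓ := m) ((finRotate (n + 1)).symm.arrowCongr (Equiv.refl α))
  have hτ (c : Necklace m (Fin (n + 1) → α)) : (τ c).map Fin.init = c.map Fin.tail := by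
    rw [Necklace.map_congr]
    congr 1
    funext row j
    simp [Fin.init, Fin.tail]
  intro x
  exact (Finset.card_equiv τ fun c => by simp [hτ]).symm

def colWindow (k : ℕ) (s : ℕ → ZMod m → α) (j : ℕ) : ZMod m → Fin k → α :=
  fun i b => s (j + b) i

lemma eqvGen_colWindow [Fintype (Necklace m (Fin (n + 1) → α))] (s : ℕ → ZMod m → α)
    (J : ℕ) (hs : ∀ j < J, Aperiodic (colWindow (n + 1) s j)) :
    Relation.EqvGen (Joins (Necklace.map Fin.init) (Necklace.map Fin.tail)
      (univ : Finset (Necklace m (Fin (n + 1) → α))))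
      ⟦colWindow n s 0⟧ ⟦colWindow n s J⟧ := by
  induction J with
  | zero => exact .refl _
  | succ J ih =>
    refine .trans _ _ _ (ih fun j hj => hs j (by omega)) (.rel _ _ ?_)
    refine ⟨Necklace.mk _ (hs J (by omega)), mem_univ _, rfl, ?_⟩
    rw [Necklace.map_mk]
    congr 1
    funext i b
    simp [colWindow, Fin.tail, Fin.val_succ, add_assoc, add_comm 1]

/-- Every vertex `v` is reached from the all-marker vertex through the windows of the column
sequence `marker, …, marker, columns of v`, each edge window having a marker column first. -/
lemma eqvGen_ringGraph [Nontrivial α] [Fintype (Necklace m (Fin (n + 1) → α))]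
    (x y : Quotient (rotSetoid m (Fin n → α))) :
    Relation.EqvGen (Joins (Necklace.map Fin.init) (Necklace.map Fin.tail)
      (univ : Finset (Necklace m (Fin (n + 1) → α)))) x y := by
  obtain ⟨a, b, hab⟩ := exists_pair_ne α
  let marker : ZMod m → α := fun i => if i = 0 then a else b
  have hmarker (v : ZMod m → Fin n → α) :
      Relation.EqvGen (Joins (Necklace.map Fin.init) (Necklace.map Fin.tail)
        (univ : Finset (Necklace m (Fin (n + 1) → α)))) ⟦fun i _ => marker i⟧ ⟦v⟧ := by
    let s : ℕ → ZMod m → α := fun j i =>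
      if j < n then marker i else if h : j - n < n then v i ⟨j - n, h⟩ else marker i
    have h0 : colWindow n s 0 = fun i _ => marker i := by
      funext i c
      simp [colWindow, s]
    have hn : colWindow n s n = v := by
      funext i c
      simp [colWindow, s]
    rw [← h0, ← hn]
    refine eqvGen_colWindow s n fun j hj => Aperiodic.of_comp (fun row => row 0) ?_
    convert aperiodic_marker (ℓ := m) hab using 1
    funext i
    simp [colWindow, s, hj, marker]
  obtain ⟨x, rfl⟩ := Quotient.exists_rep x
  obtain ⟨y, rfl⟩ := Quotient.exists_rep y
  exact .trans _ _ _ (.symm _ _ (hmarker x)) (hmarker y)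

theorem exists_overlapping_pattern_cycle [Finite α] [Nontrivial α] [NeZero m] {L : ℕ}
    (hL : Nat.card (Necklace m (Fin (n + 1) → α)) = L) :
    ∃ (W : ZMod L → ZMod m → Fin (n + 1) → α) (hap : ∀ j, Aperiodic (W j)),
      (∀ j i (c : Fin n), W (j + 1) i c.castSucc = W j i c.succ) ∧
      Function.Bijective fun j => Necklace.mk (W j) (hap j) := by
  classical
  have := Fintype.ofFinite (Necklace m (Fin (n + 1) → α))
  obtain ⟨a, b, hab⟩ := exists_pair_ne α
  let v₀ : ZMod m → Fin n → α := fun _ _ => a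
  obtain ⟨es, hes, hesnd, hesS⟩ :=
    exists_eulerian_circuit (v := ⟦v₀⟧) balanced_ringGraph fun _ _ => eqvGen_ringGraph _ _
  obtain ⟨ws, w', hws, hmap, hw'⟩ := hes.lift
    (src' := fun w : {w // Aperiodic w} => Fin.init ∘ w.1)
    (tgt' := fun w : {w // Aperiodic w} => Fin.tail ∘ w.1)
    (π := fun w => Necklace.mk w.1 w.2) (ρ := Quotient.mk _) (fun _ => rfl)
    fun e v' he => by
      obtain ⟨w, hw, rfl, rfl⟩ := Necklace.exists_mk_eq_of_map_eq Fin.init e v' he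
      exact ⟨⟨w, hw⟩, rfl, rfl⟩
  -- `v₀` is fixed by every rotation, so the lifted circuit closes up exactly
  obtain ⟨t, rfl⟩ := Quotient.exact hw'.symm
  obtain rfl : ws.length = L := by
    rw [← hL, ← Nat.card_congr
        (hesnd.getEquivOfForallMemList es fun e => (hesS e).mpr (mem_univ e)),
      Nat.card_fin, ← hmap, List.length_map]
  have : Nonempty (Necklace m (Fin (n + 1) → α)) :=
    ⟨Necklace.mk (fun i _ => if i = 0 then a else b) ((aperiodic_marker hab).of_comp (· 0))⟩
  have : NeZero ws.length := ⟨hL ▸ Nat.card_pos.ne'⟩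
  have hmk (j : ZMod ws.length) :
      Necklace.mk (ws[j.val]'j.val_lt).1 (ws[j.val]'j.val_lt).2 =
        es[j.val]'(by simpa [← hmap] using j.val_lt) := by
    simp [← hmap]
  refine ⟨fun j => (ws[j.val]'j.val_lt).1, fun j => (ws[j.val]'j.val_lt).2,
    fun j i c => (congrFun (congrFun (hws.tgt_getElem_eq_src_getElem_add_one j) i) c).symm,
    fun j j' h => ?_, fun e => ?_⟩
  · simp only [hmk] at h
    exact ZMod.val_injective _ (hesnd.getElem_inj_iff.mp h)
  · obtain ⟨idx, hidx, rfl⟩ := List.getElem_of_mem ((hesS e).mpr (mem_univ e))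
    have hidx' : idx < ws.length := by simpa [← hmap] using hidx
    refine ⟨(idx : ZMod ws.length), ?_⟩
    simp only [ZMod.val_cast_of_lt hidx']
    simp [← hmap]

end RingGraph

section Arrays

variable {α : Type*} {M N m n k L : ℕ}

def window (A : ZMod M → ZMod N → α) (k : ℕ) (p : ZMod M × ZMod N) : ZMod M → Fin k → α :=
  fun i b => A (p.1 + i) (p.2 + (b : ℕ))

lemma forall_fin_natCast_iff [NeZero M] {P : ZMod M → Prop} :
    (∀ a : Fin M, P (a : ℕ)) ↔ ∀ i, P i :=
  ⟨fun h i => ZMod.natCast_zmod_val i ▸ h ⟨i.val, i.val_lt⟩, fun h _ => h _⟩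

lemma isSubPerfectMap_iff_injective_window [NeZero M] {A : ZMod M → ZMod N → α} :
    IsSubPerfectMap M N M k A ↔ Function.Injective (window A k) := by
  have key (p q : ZMod M × ZMod N) : window A k p = window A k q ↔
      ∀ (a : Fin M) (b : Fin k),
        A (p.1 + (a : ℕ)) (p.2 + (b : ℕ)) = A (q.1 + (a : ℕ)) (q.2 + (b : ℕ)) := by
    rw [forall_fin_natCast_iff
      (P := fun i => ∀ b : Fin k, A (p.1 + i) (p.2 + (b : ℕ)) = A (q.1 + i) (q.2 + (b : ℕ)))]
    simp only [window, funext_iff]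
  simp only [IsSubPerfectMap, Function.Injective, key]

/-- The windows along the top row of `A` give pairwise distinct necklaces. -/
lemma card_le_card_necklace [Finite α] [NeZero M] {A : ZMod M → ZMod N → α}
    (hA : Function.Injective (window A k)) : N ≤ Nat.card (Necklace M (Fin k → α)) := by
  have hrot (t : ZMod M) (j : ZMod N) : rot t (window A k (0, j)) = window A k (t, j) := by
    funext i b
    simp [rot, window, add_comm]
  have hap (j : ZMod N) : Aperiodic (window A k (0, j)) := fun t ht =>
    congrArg Prod.fst (hA ((hrot t j).symm.trans ht))
  have hinj : Function.Injective fun j => Necklace.mk _ (hap j) := fun j j' h => by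
    obtain ⟨t, ht⟩ := Necklace.mk_eq_mk_iff.mp h
    exact congrArg Prod.snd (hA ((hrot t j).symm.trans ht))
  simpa using Nat.card_le_card_of_injective _ hinj

def ringArray (W : ZMod L → ZMod m → Fin (n + 1) → α) : ZMod m → ZMod L → α :=
  fun i j => W j i 0

variable {W : ZMod L → ZMod m → Fin (n + 1) → α}

lemma apply_add_natCast_zero (hW : ∀ j i (c : Fin n), W (j + 1) i c.castSucc = W j i c.succ)
    (b : ℕ) (hb : b < n + 1) (j : ZMod L) (i : ZMod m) : W (j + b) i 0 = W j i ⟨b, hb⟩ := by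
  induction b generalizing j with
  | zero => simp
  | succ b ih =>
    calc W (j + (b + 1 : ℕ)) i 0 = W (j + 1 + b) i 0 := by push_cast; ring_nf
      _ = W (j + 1) i (Fin.castSucc ⟨b, by omega⟩) := ih (by omega) (j + 1)
      _ = W j i ⟨b + 1, hb⟩ := hW _ _ _

lemma window_ringArray (hW : ∀ j i (c : Fin n), W (j + 1) i c.castSucc = W j i c.succ)
    (p : ZMod m × ZMod L) : window (ringArray W) (n + 1) p = rot p.1 (W p.2) := by
  funext i b
  simp only [window, ringArray, rot, apply_add_natCast_zero hW b b.isLt, add_comm p.1]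

lemma injective_window_ringArray
    (hW : ∀ j i (c : Fin n), W (j + 1) i c.castSucc = W j i c.succ)
    (hap : ∀ j, Aperiodic (W j)) (hinj : Function.Injective fun j => Necklace.mk (W j) (hap j)) :
    Function.Injective (window (ringArray W) (n + 1)) := by
  rintro ⟨s, j⟩ ⟨t, j'⟩ hpq
  rw [window_ringArray hW, window_ringArray hW] at hpq
  obtain rfl : j = j' := hinj (Necklace.mk_eq_mk_iff.mpr
    ⟨-t + s, by rw [← rot_rot, hpq, rot_rot, neg_add_cancel, rot_zero]⟩)
  exact Prod.ext ((hap j).rot_injective hpq) rfl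

lemma existsUnique_window_ringArray
    (hW : ∀ j i (c : Fin n), W (j + 1) i c.castSucc = W j i c.succ)
    (hap : ∀ j, Aperiodic (W j)) (hbij : Function.Bijective fun j => Necklace.mk (W j) (hap j))
    {x : ZMod m → Fin (n + 1) → α} (hx : Aperiodic x) :
    ∃! p, window (ringArray W) (n + 1) p = x := by
  obtain ⟨j, hj⟩ := hbij.2 (Necklace.mk x hx)
  obtain ⟨t, ht⟩ := Necklace.mk_eq_mk_iff.mp hj
  have hocc : window (ringArray W) (n + 1) (t, j) = x := (window_ringArray hW _).trans ht
  exact ⟨(t, j), hocc, fun q hq => injective_window_ringArray hW hap hbij.1 (hq.trans hocc.symm)⟩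

def ofFin [NeZero M] {β : Type*} (P : Fin M → β) : ZMod M → β := fun i => P ⟨i.val, i.val_lt⟩

lemma ofFin_natCast [NeZero M] {β : Type*} (P : Fin M → β) (a : Fin M) :
    ofFin P (a : ℕ) = P a :=
  congrArg P (Fin.ext (ZMod.val_cast_of_lt a.isLt))

lemma window_eq_ofFin_iff [NeZero M] {A : ZMod M → ZMod N → α} {P : Fin M → Fin k → α}
    {p : ZMod M × ZMod N} : window A k p = ofFin P ↔
      ∀ (a : Fin M) (b : Fin k), A (p.1 + (a : ℕ)) (p.2 + (b : ℕ)) = P a b := by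
  rw [funext_iff, ← forall_fin_natCast_iff]
  simp only [funext_iff, window, ofFin_natCast]

lemma RowAperiodic.aperiodic_ofFin [NeZero M] {K : ℕ} {P : Fin M → Fin k → Fin K}
    (hP : RowAperiodic P) : Aperiodic (ofFin P) := by
  intro t ht
  by_contra ht0
  refine hP ⟨t.val, t.val_lt⟩ (by simpa [ZMod.val_eq_zero] using ht0) (funext fun a => ?_)
  calc P (a + ⟨t.val, t.val_lt⟩) = ofFin P ((a : ℕ) + t) := by
        rw [← ofFin_natCast P, Fin.val_add, ZMod.natCast_mod, Nat.cast_add, ZMod.natCast_zmod_val]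
    _ = ofFin P (a : ℕ) := congrFun ht (a : ℕ)
    _ = P a := ofFin_natCast P a

end Arrays

end DeBruijnRing

open DeBruijnRing in
/-- For every `k ≥ 2` and shape `(m,n)` with `m, n ≥ 2`, there is an
`(m, M(k^n,m); m,n)_k`-sub-perfect map (an `(m,n)_k`-de Bruijn ring): it contains every
row-aperiodic `(m,n)`-pattern exactly once, and it is of maximal width among sub-perfect
maps of height `m`. -/
theorem deBruijnRing_exists (m n k : ℕ) (hm : 2 ≤ m) (hn : 2 ≤ n) (hk : 2 ≤ k) :
    ∃ A : ZMod m → ZMod (necklaceNat (k ^ n) m) → Fin k,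
      IsSubPerfectMap m (necklaceNat (k ^ n) m) m n A ∧
      (∀ P : Fin m → Fin n → Fin k, RowAperiodic P →
        ∃! p : ZMod m × ZMod (necklaceNat (k ^ n) m),
          ∀ (a : Fin m) (b : Fin n), A (p.1 + (a : ℕ)) (p.2 + (b : ℕ)) = P a b) ∧
      (∀ (N' : ℕ) (A' : ZMod m → ZMod N' → Fin k),
        1 ≤ N' → IsSubPerfectMap m N' m n A' → N' ≤ necklaceNat (k ^ n) m) := by
  obtain ⟨n, rfl⟩ : ∃ n', n = n' + 1 := ⟨n - 1, by omega⟩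
  have : NeZero m := ⟨by omega⟩
  have : Nontrivial (Fin k) := Fin.nontrivial_iff_two_le.mpr hk
  have hcard : Nat.card (Necklace m (Fin (n + 1) → Fin k)) = necklaceNat (k ^ (n + 1)) m := by
    rw [card_necklace, Nat.card_fun, Nat.card_fin, Nat.card_fin]
  obtain ⟨W, hap, hW, hbij⟩ := exists_overlapping_pattern_cycle hcard
  refine ⟨ringArray W,
    isSubPerfectMap_iff_injective_window.mpr (injective_window_ringArray hW hap hbij.1),
    fun P hP => ?_, fun N' A' _ hA' => ?_⟩
  · simpa only [window_eq_ofFin_iff] using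
      existsUnique_window_ringArray hW hap hbij (RowAperiodic.aperiodic_ofFin hP)
  · exact hcard ▸ card_le_card_necklace (isSubPerfectMap_iff_injective_window.mp hA')
end

section
/- If A₁ is an (M₁, N₁; m, n)_{k₁}-sub-perfect map and A₂ is an (M₂, N₂; m, n)_{k₂}-sub-perfect map, then the superposition of A₁ and A₂ over the product alphabet is an (lcm(M₁,M₂), lcm(N₁,N₂); m, n)_{k₁k₂}-sub-perfect map. -/
/-!
A window of the superposition projects onto a window of `A₁` and one of `A₂`, read at the
reductions of its position modulo `M₁, N₁` and `M₂, N₂`. So two equal windows of the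
superposition sit at positions with equal reductions modulo all four periods, and a residue
modulo `lcm(M₁, M₂)` is determined by its residues modulo `M₁` and `M₂`.
-/

namespace ZMod

theorem eq_of_castHom_lcm_eq {a b : ℕ} {x y : ZMod (a.lcm b)}
    (ha : castHom (Nat.dvd_lcm_left a b) (ZMod a) x = castHom (Nat.dvd_lcm_left a b) (ZMod a) y)
    (hb : castHom (Nat.dvd_lcm_right a b) (ZMod b) x =
      castHom (Nat.dvd_lcm_right a b) (ZMod b) y) :
    x = y := by
  rw [← sub_eq_zero] at ha hb ⊢
  rw [← map_sub] at ha hb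
  obtain ⟨z, hz⟩ := intCast_surjective (x - y)
  rw [← hz, map_intCast, intCast_zmod_eq_zero_iff_dvd] at ha hb
  rw [← hz, intCast_zmod_eq_zero_iff_dvd]
  exact_mod_cast Int.coe_lcm_dvd_iff.mpr ⟨ha, hb⟩

end ZMod

theorem IsSubPerfectMap.castHom_eq_of_window_eq {M N M' N' m n : ℕ} {α : Type*}
    {A : ZMod M → ZMod N → α} (hA : IsSubPerfectMap M N m n A) (hM : M ∣ M') (hN : N ∣ N')
    {p q : ZMod M' × ZMod N'}
    (h : ∀ (a : Fin m) (b : Fin n),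
      A (ZMod.castHom hM (ZMod M) (p.1 + (a : ℕ))) (ZMod.castHom hN (ZMod N) (p.2 + (b : ℕ))) =
        A (ZMod.castHom hM (ZMod M) (q.1 + (a : ℕ)))
          (ZMod.castHom hN (ZMod N) (q.2 + (b : ℕ)))) :
    ZMod.castHom hM (ZMod M) p.1 = ZMod.castHom hM (ZMod M) q.1 ∧
      ZMod.castHom hN (ZMod N) p.2 = ZMod.castHom hN (ZMod N) q.2 :=
  Prod.ext_iff.mp <| hA (ZMod.castHom hM (ZMod M) p.1, ZMod.castHom hN (ZMod N) p.2)
    (ZMod.castHom hM (ZMod M) q.1, ZMod.castHom hN (ZMod N) q.2) fun a b => by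
      simpa only [map_add, map_natCast] using h a b

/-- If `A₁` is an `(M₁,N₁; m,n)_{k₁}`-sub-perfect map and `A₂` is an
`(M₂,N₂; m,n)_{k₂}`-sub-perfect map, then their superposition over the product alphabet
(of size `k₁k₂`) is an `(lcm(M₁,M₂), lcm(N₁,N₂); m,n)_{k₁k₂}`-sub-perfect map. -/
theorem superposition_subPerfect (M₁ N₁ M₂ N₂ m n k₁ k₂ : ℕ)
    (A₁ : ZMod M₁ → ZMod N₁ → Fin k₁) (A₂ : ZMod M₂ → ZMod N₂ → Fin k₂)
    (h₁ : IsSubPerfectMap M₁ N₁ m n A₁) (h₂ : IsSubPerfectMap M₂ N₂ m n A₂) :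
    IsSubPerfectMap (Nat.lcm M₁ M₂) (Nat.lcm N₁ N₂) m n
      (fun (i : ZMod (Nat.lcm M₁ M₂)) (j : ZMod (Nat.lcm N₁ N₂)) =>
        (A₁ (ZMod.castHom (Nat.dvd_lcm_left M₁ M₂) (ZMod M₁) i)
            (ZMod.castHom (Nat.dvd_lcm_left N₁ N₂) (ZMod N₁) j),
         A₂ (ZMod.castHom (Nat.dvd_lcm_right M₁ M₂) (ZMod M₂) i)
            (ZMod.castHom (Nat.dvd_lcm_right N₁ N₂) (ZMod N₂) j))) := by
  intro p q h
  obtain ⟨hM₁, hN₁⟩ := h₁.castHom_eq_of_window_eq _ _ fun a b => congrArg Prod.fst (h a b)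
  obtain ⟨hM₂, hN₂⟩ := h₂.castHom_eq_of_window_eq _ _ fun a b => congrArg Prod.snd (h a b)
  exact Prod.ext (ZMod.eq_of_castHom_lcm_eq hM₁ hM₂) (ZMod.eq_of_castHom_lcm_eq hN₁ hN₂)
end

section
/- If A₁ and A₂ are perfect maps of types (M₁, N₁; m, n)_{k₁} and (M₂, N₂; m, n)_{k₂} respectively, then their superposition over the product alphabet is a perfect map of type (M₁M₂, N₁N₂; m, n)_{k₁k₂} if and only if gcd(M₁, M₂) = 1 and gcd(N₁, N₂) = 1. -/
/-- `A` is a cyclic `M × N` array in which every `(m,n)`-pattern occurs exactly once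
(a perfect map, i.e. a de Bruijn torus). -/
def IsPerfectMap (M N m n : ℕ) {α : Type*} (A : ZMod M → ZMod N → α) : Prop :=
  ∀ P : Fin m → Fin n → α,
    ∃! p : ZMod M × ZMod N,
      ∀ (a : Fin m) (b : Fin n), A (p.1 + (a : ℕ)) (p.2 + (b : ℕ)) = P a b

/-- The window function of an array. -/
def deBruijnWin (M N m n : ℕ) {α : Type*} (A : ZMod M → ZMod N → α) :
    ZMod M × ZMod N → (Fin m → Fin n → α) :=
  fun p a b => A (p.1 + (a : ℕ)) (p.2 + (b : ℕ))

lemma isPerfectMap_iff_bijective (M N m n : ℕ) {α : Type*} (A : ZMod M → ZMod N → α) :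
    IsPerfectMap M N m n A ↔ Function.Bijective (deBruijnWin M N m n A) := by
  rw [Function.bijective_iff_existsUnique]
  refine forall_congr' fun P => existsUnique_congr fun p => ?_
  simp [deBruijnWin, funext_iff]

lemma castPair_bijective_iff (a b : ℕ) (ha : 0 < a) (hb : 0 < b) :
    Function.Bijective (fun i : ZMod (a * b) =>
      (ZMod.castHom (Dvd.intro b rfl) (ZMod a) i,
       ZMod.castHom (Dvd.intro_left a rfl) (ZMod b) i)) ↔ Nat.gcd a b = 1 := by
  haveI : NeZero a := ⟨ha.ne'⟩
  haveI : NeZero b := ⟨hb.ne'⟩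
  haveI : NeZero (a * b) := ⟨(Nat.mul_pos ha hb).ne'⟩
  constructor
  · intro h
    by_contra hg
    set L := Nat.lcm a b with hL
    have hLpos : 0 < L := Nat.pos_of_ne_zero (Nat.lcm_ne_zero ha.ne' hb.ne')
    have hmul : Nat.gcd a b * L = a * b := Nat.gcd_mul_lcm a b
    have hg2 : 2 ≤ Nat.gcd a b := by
      have h1 : Nat.gcd a b ≠ 0 := Nat.gcd_ne_zero_left ha.ne'
      omega
    have hLlt : L < a * b := by nlinarith
    have him : (fun i : ZMod (a * b) =>
        (ZMod.castHom (Dvd.intro b rfl) (ZMod a) i,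
         ZMod.castHom (Dvd.intro_left a rfl) (ZMod b) i)) ((L : ℕ) : ZMod (a * b))
        = (fun i : ZMod (a * b) =>
        (ZMod.castHom (Dvd.intro b rfl) (ZMod a) i,
         ZMod.castHom (Dvd.intro_left a rfl) (ZMod b) i)) 0 := by
      simp only [map_natCast, map_zero, Prod.mk.injEq]
      constructor
      · rw [ZMod.natCast_eq_zero_iff]; exact Nat.dvd_lcm_left a b
      · rw [ZMod.natCast_eq_zero_iff]; exact Nat.dvd_lcm_right a b
    have h0 := h.injective him
    rw [ZMod.natCast_eq_zero_iff] at h0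
    exact absurd (Nat.le_of_dvd hLpos h0) (not_le.mpr hLlt)
  · intro h
    rw [Fintype.bijective_iff_injective_and_card]
    constructor
    · -- injective
      have key : ∀ x : ZMod (a * b),
          ZMod.castHom (Dvd.intro b rfl) (ZMod a) x = 0 →
          ZMod.castHom (Dvd.intro_left a rfl) (ZMod b) x = 0 → x = 0 := by
        intro x hxa hxb
        have hx : ((x.val : ℕ) : ZMod (a * b)) = x := ZMod.natCast_zmod_val x
        rw [← hx, map_natCast, ZMod.natCast_eq_zero_iff] at hxa
        rw [← hx, map_natCast, ZMod.natCast_eq_zero_iff] at hxb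
        have hdvd : a * b ∣ x.val := Nat.Coprime.mul_dvd_of_dvd_of_dvd h hxa hxb
        have := Nat.eq_zero_of_dvd_of_lt hdvd
        have hlt : x.val < a * b := ZMod.val_lt x
        have hv : x.val = 0 := by
          rcases Nat.eq_zero_or_pos x.val with h0 | h0
          · exact h0
          · exact absurd (Nat.le_of_dvd h0 hdvd) (not_le.mpr hlt)
        exact (ZMod.val_eq_zero x).mp hv
      intro x y hxy
      simp only [Prod.mk.injEq] at hxy
      have hsub := key (x - y) (by rw [map_sub, hxy.1, sub_self]) (by rw [map_sub, hxy.2, sub_self])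
      exact sub_eq_zero.mp hsub
    · simp [ZMod.card]

/-- If `A₁` and `A₂` are perfect maps of types `(M₁,N₁; m,n)_{k₁}` and `(M₂,N₂; m,n)_{k₂}`,
then their superposition over the product alphabet is a perfect map of type
`(M₁M₂, N₁N₂; m,n)_{k₁k₂}` if and only if `gcd(M₁,M₂) = 1` and `gcd(N₁,N₂) = 1`. -/
theorem superposition_perfect_iff (M₁ N₁ M₂ N₂ m n k₁ k₂ : ℕ)
    (hM₁ : 1 ≤ M₁) (hN₁ : 1 ≤ N₁) (hM₂ : 1 ≤ M₂) (hN₂ : 1 ≤ N₂)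
    (hm : 1 ≤ m) (hn : 1 ≤ n)
    (A₁ : ZMod M₁ → ZMod N₁ → Fin k₁) (A₂ : ZMod M₂ → ZMod N₂ → Fin k₂)
    (h₁ : IsPerfectMap M₁ N₁ m n A₁) (h₂ : IsPerfectMap M₂ N₂ m n A₂) :
    IsPerfectMap (M₁ * M₂) (N₁ * N₂) m n
      (fun (i : ZMod (M₁ * M₂)) (j : ZMod (N₁ * N₂)) =>
        (A₁ (ZMod.castHom (Dvd.intro M₂ rfl) (ZMod M₁) i)
            (ZMod.castHom (Dvd.intro N₂ rfl) (ZMod N₁) j),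
         A₂ (ZMod.castHom (Dvd.intro_left M₁ rfl) (ZMod M₂) i)
            (ZMod.castHom (Dvd.intro_left N₁ rfl) (ZMod N₂) j)))
      ↔ Nat.gcd M₁ M₂ = 1 ∧ Nat.gcd N₁ N₂ = 1 := by
  haveI : Nonempty (ZMod (M₁ * M₂)) := ⟨0⟩
  haveI : Nonempty (ZMod (N₁ * N₂)) := ⟨0⟩
  rw [isPerfectMap_iff_bijective] at h₁ h₂ ⊢
  -- the packaging bijection on patterns
  let g : (Fin m → Fin n → Fin k₁) × (Fin m → Fin n → Fin k₂) →
      (Fin m → Fin n → Fin k₁ × Fin k₂) := fun q a b => (q.1 a b, q.2 a b)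
  have hg : Function.Bijective g := by
    constructor
    · intro x y hxy
      have h1 : ∀ a b, (g x a b) = (g y a b) := fun a b => by rw [hxy]
      refine Prod.ext (funext fun a => funext fun b => ?_) (funext fun a => funext fun b => ?_)
      · exact congrArg Prod.fst (h1 a b)
      · exact congrArg Prod.snd (h1 a b)
    · intro h
      exact ⟨(fun a b => (h a b).1, fun a b => (h a b).2), rfl⟩
  let FM : ZMod (M₁ * M₂) → ZMod M₁ × ZMod M₂ := fun i =>
    (ZMod.castHom (Dvd.intro M₂ rfl) (ZMod M₁) i,
     ZMod.castHom (Dvd.intro_left M₁ rfl) (ZMod M₂) i)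
  let FN : ZMod (N₁ * N₂) → ZMod N₁ × ZMod N₂ := fun j =>
    (ZMod.castHom (Dvd.intro N₂ rfl) (ZMod N₁) j,
     ZMod.castHom (Dvd.intro_left N₁ rfl) (ZMod N₂) j)
  have claim : deBruijnWin (M₁ * M₂) (N₁ * N₂) m n
      (fun (i : ZMod (M₁ * M₂)) (j : ZMod (N₁ * N₂)) =>
        (A₁ (ZMod.castHom (Dvd.intro M₂ rfl) (ZMod M₁) i)
            (ZMod.castHom (Dvd.intro N₂ rfl) (ZMod N₁) j),
         A₂ (ZMod.castHom (Dvd.intro_left M₁ rfl) (ZMod M₂) i)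
            (ZMod.castHom (Dvd.intro_left N₁ rfl) (ZMod N₂) j))) =
      g ∘ Prod.map (deBruijnWin M₁ N₁ m n A₁) (deBruijnWin M₂ N₂ m n A₂) ∘
        (Equiv.prodProdProdComm (ZMod M₁) (ZMod M₂) (ZMod N₁) (ZMod N₂)) ∘
        Prod.map FM FN := by
    funext p
    funext a b
    simp [deBruijnWin, g, FM, FN, Equiv.prodProdProdComm, map_add, map_natCast]
  rw [claim,
    Function.Bijective.of_comp_iff' hg,
    Function.Bijective.of_comp_iff' (h₁.prodMap h₂),
    Function.Bijective.of_comp_iff' (Equiv.prodProdProdComm _ _ _ _).bijective,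
    Prod.map_bijective,
    castPair_bijective_iff M₁ M₂ hM₁ hM₂,
    castPair_bijective_iff N₁ N₂ hN₁ hN₂]
end
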